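/- Let H be the group Hopf algebra k[F₁] of the free group on one generator g over a field k, and let K = k[M₁] be the subalgebra spanned by nonnegative powers of g (the free monoid on g). Then K is a right coideal subalgebra of H and HK⁺ = HH⁺ = ker ε; in particular the map K ↦ H/HK⁺ from right coideal subalgebras to generalised quotients is not injective (both K and H map to H/ker ε ≅ k). -/

import Mathlib

open TensorProduct

variable {k H : Type*} [Field k] [Ring H] [HopfAlgebra k H]

/-- A right coideal subalgebra: a subalgebra `K` of `H` with `Δ(K) ⊆ K ⊗ H`. -/
def IsRightCoidealSubalgebra (K : Subalgebra k H) : Prop :=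
  ∀ x ∈ K, Coalgebra.comul (R := k) x ∈
    LinearMap.range (LinearMap.rTensor H K.toSubmodule.subtype)

/-- A left ideal coideal of `H`: `HI ⊆ I`, `Δ(I) ⊆ I ⊗ H + H ⊗ I`, `ε(I) = 0`. -/
def IsLeftIdealCoideal (I : Submodule k H) : Prop :=
  (∀ x ∈ I, ∀ h : H, h * x ∈ I) ∧
  (∀ x ∈ I, Coalgebra.comul (R := k) x ∈
      LinearMap.range (LinearMap.rTensor H I.subtype) ⊔
        LinearMap.range (LinearMap.lTensor H I.subtype)) ∧
  ∀ x ∈ I, Coalgebra.counit (R := k) x = 0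

/-- The augmentation ideal `W⁺ = W ∩ ker ε` of a subspace `W ⊆ H`. -/
def augIdeal (W : Submodule k H) : Submodule k H :=
  W ⊓ LinearMap.ker (Coalgebra.counit (R := k) (A := H))

/-- The left ideal `H·W` generated by a subspace `W ⊆ H`. -/
def leftIdealGen (W : Submodule k H) : Submodule k H :=
  Submodule.span k {x : H | ∃ h : H, ∃ y ∈ W, x = h * y}

/-- The coinvariants `^{co H/I}H = { h : π(h₁) ⊗ h₂ = π(1) ⊗ h }` of the left
coaction of the quotient coalgebra `H/I` on `H`. -/
def lCoinv (I : Submodule k H) : Set H :=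
  {h : H | LinearMap.rTensor H I.mkQ (Coalgebra.comul (R := k) h) =
    I.mkQ 1 ⊗ₜ[k] h}

lemma leftIdealGen_le_ker (W : Submodule k H) :
    leftIdealGen (augIdeal W) ≤ LinearMap.ker (Coalgebra.counit (R := k) (A := H)) := by
  apply Submodule.span_le.2
  rintro x ⟨h, y, hy, rfl⟩
  have hy' : Coalgebra.counit (R := k) y = 0 :=
    LinearMap.mem_ker.mp ((Submodule.mem_inf.mp hy).2)
  simp [LinearMap.mem_ker, SetLike.mem_coe, Bialgebra.counit_mul, hy']

lemma counit_unit_zpow (g : Hˣ) (hεg : Coalgebra.counit (R := k) (g : H) = 1) (n : ℤ) :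
    Coalgebra.counit (R := k) ((g ^ n : Hˣ) : H) = 1 := by
  let φ : Hˣ →* kˣ := Units.map (Bialgebra.counitAlgHom k H).toRingHom.toMonoidHom
  have h1 : φ g = 1 := Units.ext (by simpa [φ] using hεg)
  have h2 : φ (g ^ n) = 1 := by rw [map_zpow, h1, one_zpow]
  calc Coalgebra.counit (R := k) ((g ^ n : Hˣ) : H) = ((φ (g ^ n) : kˣ) : k) := rfl
    _ = 1 := by rw [h2]; rfl

lemma rTensor_eq_map (K : Subalgebra k H) :
    LinearMap.rTensor H K.toSubmodule.subtype =
      (Algebra.TensorProduct.map K.val (AlgHom.id k H)).toLinearMap := by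
  ext x y
  rfl

lemma mem_range_rTensor_iff (K : Subalgebra k H) (a : H ⊗[k] H) :
    a ∈ LinearMap.range (LinearMap.rTensor H K.toSubmodule.subtype) ↔
      ∃ u : K ⊗[k] H, (Algebra.TensorProduct.map K.val (AlgHom.id k H)) u = a := by
  rw [rTensor_eq_map]
  exact Iff.rfl

lemma range_mul_mem (K : Subalgebra k H) {a c : H ⊗[k] H}
    (ha : a ∈ LinearMap.range (LinearMap.rTensor H K.toSubmodule.subtype))
    (hc : c ∈ LinearMap.range (LinearMap.rTensor H K.toSubmodule.subtype)) :
    a * c ∈ LinearMap.range (LinearMap.rTensor H K.toSubmodule.subtype) := by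
  obtain ⟨u, hu⟩ := (mem_range_rTensor_iff K a).mp ha
  obtain ⟨v, hv⟩ := (mem_range_rTensor_iff K c).mp hc
  exact (mem_range_rTensor_iff K _).mpr ⟨u * v, by rw [map_mul, hu, hv]⟩

lemma counit_pow (g : Hˣ) (hεg : Coalgebra.counit (R := k) (g : H) = 1) (m : ℕ) :
    Coalgebra.counit (R := k) ((g : H) ^ m) = 1 := by
  have := counit_unit_zpow g hεg (m : ℤ)
  simpa [zpow_natCast, Units.val_pow_eq_pow_val] using this

lemma pow_sub_one_mem (g : Hˣ) (hεg : Coalgebra.counit (R := k) (g : H) = 1) (n : ℤ) :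
    ((g ^ n : Hˣ) : H) - 1 ∈
      leftIdealGen (augIdeal (Algebra.adjoin k {(g : H)}).toSubmodule) := by
  have hmemK : ∀ m : ℕ, (g : H) ^ m - 1 ∈
      augIdeal (Algebra.adjoin k {(g : H)}).toSubmodule := by
    intro m
    refine Submodule.mem_inf.mpr ⟨?_, ?_⟩
    · exact sub_mem ((Subalgebra.mem_toSubmodule _).mpr (pow_mem (Algebra.self_mem_adjoin_singleton k _) m))
        ((Subalgebra.mem_toSubmodule _).mpr (one_mem _))
    · simp [LinearMap.mem_ker, map_sub, counit_pow g hεg m]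
  rcases le_or_gt 0 n with hn | hn
  · have hm : ((n.toNat : ℤ)) = n := Int.toNat_of_nonneg hn
    have hgn : ((g ^ n : Hˣ) : H) = (g : H) ^ n.toNat := by
      conv_lhs => rw [← hm]
      rw [zpow_natCast, Units.val_pow_eq_pow_val]
    rw [hgn]
    exact Submodule.subset_span ⟨1, _, hmemK n.toNat, by rw [one_mul]⟩
  · set m := (-n).toNat with hmdef
    have hm : ((m : ℤ)) = -n := Int.toNat_of_nonneg (by omega)
    have hgm : ((g ^ (-n) : Hˣ) : H) = (g : H) ^ m := by
      conv_lhs => rw [← hm]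
      rw [zpow_natCast, Units.val_pow_eq_pow_val]
    refine Submodule.subset_span ⟨-((g ^ n : Hˣ) : H), _, hmemK m, ?_⟩
    have hmul : ((g ^ n : Hˣ) : H) * ((g ^ (-n) : Hˣ) : H) = 1 := by
      rw [← Units.val_mul, ← zpow_add, add_neg_cancel, zpow_zero, Units.val_one]
    rw [← hgm, neg_mul, mul_sub, hmul, mul_one, neg_sub]

lemma ker_le_of_pow_sub_one (g : Hˣ) (hεg : Coalgebra.counit (R := k) (g : H) = 1)
    (b : Module.Basis ℤ k H) (hb : ∀ n : ℤ, b n = ((g ^ n : Hˣ) : H))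
    {I : Submodule k H} (hI : ∀ n : ℤ, ((g ^ n : Hˣ) : H) - 1 ∈ I) :
    LinearMap.ker (Coalgebra.counit (R := k) (A := H)) ≤ I := by
  intro x hx
  have hrepr : ((b.repr x).sum fun i c => c • b i) = x := by
    conv_rhs => rw [← b.linearCombination_repr x]
    rw [Finsupp.linearCombination_apply]
  have hεbi : ∀ i : ℤ, Coalgebra.counit (R := k) (b i) = 1 := fun i => by
    rw [hb]; exact counit_unit_zpow g hεg i
  have hsum : ((b.repr x).sum fun _ c => c) = 0 := by
    have h0 := congrArg (Coalgebra.counit (R := k)) hrepr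
    rw [map_finsuppSum] at h0
    simp only [map_smul, hεbi, smul_eq_mul, mul_one] at h0
    rw [h0]
    exact LinearMap.mem_ker.mp hx
  have hx' : ((b.repr x).sum fun i c => c • (b i - 1)) = x := by
    simp only [smul_sub]
    rw [Finsupp.sum_sub]
    rw [hrepr]
    have : ((b.repr x).sum fun _ c => c • (1 : H)) = ((b.repr x).sum fun _ c => c) • (1 : H) := by
      rw [Finsupp.sum, Finsupp.sum, Finset.sum_smul]
    rw [this, hsum, zero_smul, sub_zero]
  rw [← hx']
  refine Submodule.sum_mem I fun i _ => Submodule.smul_mem I _ ?_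
  rw [hb]
  exact hI i

lemma coord_neg_one_eq_zero (g : Hˣ) (b : Module.Basis ℤ k H)
    (hb : ∀ n : ℤ, b n = ((g ^ n : Hˣ) : H))
    {x : H} (hx : x ∈ Algebra.adjoin k {(g : H)}) : b.repr x (-1) = 0 := by
  rw [Algebra.adjoin_singleton_eq_range_aeval] at hx
  rw [AlgHom.mem_range] at hx
  obtain ⟨p, hp⟩ := hx
  have hxe : x = p.sum fun n a => a • (g : H) ^ n := by
    rw [← hp, Polynomial.aeval_def, Polynomial.eval₂_eq_sum, Polynomial.sum, Polynomial.sum]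
    exact Finset.sum_congr rfl fun n _ => (Algebra.smul_def _ _).symm
  have hgb : ∀ n : ℕ, (g : H) ^ n = b (n : ℤ) := fun n => by
    rw [hb, zpow_natCast, Units.val_pow_eq_pow_val]
  rw [hxe, Polynomial.sum]
  rw [map_sum]
  rw [Finset.sum_apply']
  refine Finset.sum_eq_zero fun n _ => ?_
  rw [map_smul, hgb, b.repr_self, Finsupp.smul_apply, Finsupp.single_apply]
  rw [if_neg (by omega), smul_zero]

/-- Let `H = k[F₁]` be the group Hopf algebra of the free group on one generator:
we axiomatize it as a Hopf algebra with a grouplike unit `g` (`Δ(g) = g ⊗ g`,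
`ε(g) = 1`) whose integer powers form a `k`-basis.  Let `K = k[M₁]` be the
subalgebra generated by `g` (spanned by the nonnegative powers of `g`).  Then `K`
is a right coideal subalgebra of `H` and `HK⁺ = HH⁺ = ker ε`, while `K ≠ H`; in
particular the map `K ↦ H/HK⁺` from right coideal subalgebras to generalised
quotients is not injective (both `K` and `H` map to `H/ker ε ≅ k`). -/

theorem free_group_algebra_not_injective
    (g : Hˣ)
    (hg : Coalgebra.comul (R := k) (g : H) = (g : H) ⊗ₜ[k] (g : H))
    (hεg : Coalgebra.counit (R := k) (g : H) = 1)
    (b : Module.Basis ℤ k H) (hb : ∀ n : ℤ, b n = ((g ^ n : Hˣ) : H)) :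
    letI K : Subalgebra k H := Algebra.adjoin k {(g : H)}
    IsRightCoidealSubalgebra K ∧
    leftIdealGen (augIdeal K.toSubmodule) =
      LinearMap.ker (Coalgebra.counit (R := k) (A := H)) ∧
    leftIdealGen (augIdeal (⊤ : Subalgebra k H).toSubmodule) =
      LinearMap.ker (Coalgebra.counit (R := k) (A := H)) ∧
    K ≠ ⊤ := by
  set K : Subalgebra k H := Algebra.adjoin k {(g : H)} with hKdef
  have hIK : leftIdealGen (augIdeal K.toSubmodule) =
      LinearMap.ker (Coalgebra.counit (R := k) (A := H)) :=
    le_antisymm (leftIdealGen_le_ker _)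
      (ker_le_of_pow_sub_one g hεg b hb (pow_sub_one_mem g hεg))
  refine ⟨?_, hIK, ?_, ?_⟩
  · intro x hx
    induction hx using Algebra.adjoin_induction with
    | mem y hy =>
      rw [Set.mem_singleton_iff] at hy
      subst hy
      refine (mem_range_rTensor_iff K _).mpr
        ⟨(⟨(g : H), Algebra.self_mem_adjoin_singleton k _⟩ : K) ⊗ₜ[k] (g : H), ?_⟩
      rw [hg]
      rfl
    | algebraMap r =>
      exact (mem_range_rTensor_iff K _).mpr
        ⟨algebraMap k _ r, by rw [AlgHom.commutes, Bialgebra.comul_algebraMap]⟩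
    | add x y hx hy ihx ihy =>
      rw [map_add]
      exact Submodule.add_mem _ ihx ihy
    | mul x y hx hy ihx ihy =>
      rw [Bialgebra.comul_mul]
      exact range_mul_mem K ihx ihy
  · refine le_antisymm (leftIdealGen_le_ker _) ?_
    refine ker_le_of_pow_sub_one g hεg b hb fun n => ?_
    have hmono : leftIdealGen (augIdeal K.toSubmodule) ≤
        leftIdealGen (augIdeal (⊤ : Subalgebra k H).toSubmodule) := by
      apply Submodule.span_mono
      rintro x ⟨h, y, hy, rfl⟩
      exact ⟨h, y, Submodule.mem_inf.mpr
        ⟨(Subalgebra.mem_toSubmodule _).mpr Algebra.mem_top, (Submodule.mem_inf.mp hy).2⟩, rfl⟩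
    exact hmono (pow_sub_one_mem g hεg n)
  · intro h
    have hm : ((g⁻¹ : Hˣ) : H) ∈ K := by rw [h]; exact Algebra.mem_top
    have h0 := coord_neg_one_eq_zero g b hb hm
    have h1 : b.repr ((g⁻¹ : Hˣ) : H) (-1) = 1 := by
      have he : ((g ^ (-1 : ℤ) : Hˣ) : H) = ((g⁻¹ : Hˣ) : H) := by rw [zpow_neg_one]
      rw [← he, ← hb, b.repr_self]
      simp
    exact one_ne_zero (h1 ▸ h0)
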